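/- There exists a constant C > 0 such that ∫₀^{y₂} erfc(z₂/2)/(y₂ − z₂ + 1) dz₂ ≤ C·y₂/(y₂+1)² for all y₂ > 0. -/

import Mathlib

/-!
Completing the square, `e^{-t²} ≤ e^{1-2t}`, gives `erfc s ≤ 2 e^{-2s}`, so the integrand is at
most `2 e^{-z} / (y - z + 1)`. Since `(z + 1)(y - z + 1) ≥ y + 1` on `[0, y]` and
`(z + 1)³ ≤ 6 e^z`, it is at most `12 / ((y + 1)(z + 1)²)`, whose integral over `[0, y]` is
`12 y / (y + 1)²`.
-/

open MeasureTheory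

/-- The complementary error function `erfc(s) = (2/√π) ∫_s^∞ e^{−t²} dt`. -/
noncomputable def erfc (s : ℝ) : ℝ :=
  (2 / Real.sqrt Real.pi) * ∫ t in Set.Ioi s, Real.exp (-t^2)

open Real Set

lemma erfc_nonneg (s : ℝ) : 0 ≤ erfc s :=
  mul_nonneg (by positivity) (setIntegral_nonneg measurableSet_Ioi fun t _ => (exp_pos _).le)

lemma integral_exp_neg_sq_Ioi_le (s : ℝ) :
    ∫ t in Ioi s, exp (-t ^ 2) ≤ exp 1 / 2 * exp (-2 * s) := by
  have hsq (t : ℝ) : exp (-t ^ 2) ≤ exp 1 * exp (-2 * t) := by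
    rw [← exp_add]
    exact exp_le_exp.2 (by nlinarith [sq_nonneg (t - 1)])
  calc ∫ t in Ioi s, exp (-t ^ 2)
      ≤ ∫ t in Ioi s, exp 1 * exp (-2 * t) :=
        integral_mono_of_nonneg (ae_of_all _ fun t => (exp_pos _).le)
          ((exp_neg_integrableOn_Ioi s two_pos).const_mul _) (ae_of_all _ hsq)
    _ = exp 1 / 2 * exp (-2 * s) := by
        rw [integral_const_mul, integral_exp_mul_Ioi (by norm_num)]
        ring

lemma erfc_le_two_mul_exp (s : ℝ) : erfc s ≤ 2 * exp (-2 * s) := by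
  have hpi : 3 / 2 ≤ √π := (le_sqrt (by norm_num) pi_pos.le).2 (by linarith [pi_gt_three])
  have he : exp 1 < 3 := by linarith [exp_one_lt_d9]
  calc erfc s ≤ 2 / √π * (exp 1 / 2 * exp (-2 * s)) :=
        mul_le_mul_of_nonneg_left (integral_exp_neg_sq_Ioi_le s) (by positivity)
    _ = exp 1 / √π * exp (-2 * s) := by ring
    _ ≤ 2 * exp (-2 * s) := by
        gcongr
        rw [div_le_iff₀ (by positivity)]
        linarith

lemma one_add_pow_three_le_six_mul_exp {x : ℝ} (hx : 0 ≤ x) : (1 + x) ^ 3 ≤ 6 * exp x := by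
  have htaylor : 1 + x + x ^ 2 / 2 + x ^ 3 / 6 ≤ exp x := by
    simpa [Finset.sum_range_succ, Nat.factorial] using sum_le_exp_of_nonneg hx 4
  nlinarith [pow_nonneg hx 3]

lemma one_div_sub_add_one_le {y z : ℝ} (hz : 0 ≤ z) (hzy : z ≤ y) :
    1 / (y - z + 1) ≤ (z + 1) / (y + 1) := by
  rw [div_le_div_iff₀ (by linarith) (by linarith)]
  nlinarith

lemma intervalIntegral.integral_mono_on_of_nonneg {f g : ℝ → ℝ} {a b : ℝ} (hab : a ≤ b)
    (hf : ∀ x ∈ Ioc a b, 0 ≤ f x) (hg : IntervalIntegrable g volume a b)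
    (hfg : ∀ x ∈ Ioc a b, f x ≤ g x) : ∫ x in a..b, f x ≤ ∫ x in a..b, g x := by
  rw [intervalIntegral.integral_of_le hab, intervalIntegral.integral_of_le hab]
  exact integral_mono_of_nonneg (ae_restrict_of_forall_mem measurableSet_Ioc hf)
    hg.1 (ae_restrict_of_forall_mem measurableSet_Ioc hfg)

lemma add_one_pos_of_mem_uIcc {y z : ℝ} (hy : -1 < y) (hz : z ∈ uIcc 0 y) : 0 < z + 1 := by
  linarith [(lt_min neg_one_lt_zero hy).trans_le hz.1]

lemma intervalIntegrable_one_div_add_one_sq {y : ℝ} (hy : -1 < y) :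
    IntervalIntegrable (fun z => 1 / (z + 1) ^ 2) volume 0 y :=
  ContinuousOn.intervalIntegrable fun _ hz =>
    (continuousAt_const.div ((continuous_add_const 1).pow 2).continuousAt
      (pow_pos (add_one_pos_of_mem_uIcc hy hz) 2).ne').continuousWithinAt

lemma integral_one_div_add_one_sq {y : ℝ} (hy : -1 < y) :
    ∫ z in (0 : ℝ)..y, 1 / (z + 1) ^ 2 = y / (y + 1) := by
  rw [intervalIntegral.integral_eq_sub_of_hasDerivAt (f := fun z => -(z + 1)⁻¹) _
    (intervalIntegrable_one_div_add_one_sq hy)]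
  · have : y + 1 ≠ 0 := by linarith
    field_simp
    ring
  · intro z hz
    exact (((hasDerivAt_id z).add_const 1).inv (add_one_pos_of_mem_uIcc hy hz).ne').neg.congr_deriv
      (by simp [neg_div])

lemma erfc_half_div_le {y z : ℝ} (hz : 0 ≤ z) (hzy : z ≤ y) :
    erfc (z / 2) / (y - z + 1) ≤ 12 / (y + 1) * (1 / (z + 1) ^ 2) := by
  have hcubic : (z + 1) * exp (-z) ≤ 6 / (z + 1) ^ 2 := by
    rw [exp_neg, le_div_iff₀ (by positivity)]
    have := one_add_pow_three_le_six_mul_exp hz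
    have := exp_pos z
    field_simp
    nlinarith
  calc erfc (z / 2) / (y - z + 1) = erfc (z / 2) * (1 / (y - z + 1)) := by ring
    _ ≤ 2 * exp (-z) * ((z + 1) / (y + 1)) :=
        mul_le_mul (by simpa [mul_div_cancel₀] using erfc_le_two_mul_exp (z / 2))
          (one_div_sub_add_one_le hz hzy) (one_div_nonneg.2 (by linarith)) (by positivity)
    _ = 2 / (y + 1) * ((z + 1) * exp (-z)) := by ring
    _ ≤ 2 / (y + 1) * (6 / (z + 1) ^ 2) :=
        mul_le_mul_of_nonneg_left hcubic (div_pos two_pos (by linarith)).le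
    _ = 12 / (y + 1) * (1 / (z + 1) ^ 2) := by ring

/-- There is `C > 0` such that
`∫₀^{y₂} erfc(z₂/2)/(y₂ − z₂ + 1) dz₂ ≤ C y₂/(y₂+1)²` for all `y₂ > 0`. -/
theorem erfc_integral_bound :
    ∃ C > 0, ∀ y₂ : ℝ, 0 < y₂ →
      (∫ z₂ in (0:ℝ)..y₂, erfc (z₂ / 2) / (y₂ - z₂ + 1))
        ≤ C * y₂ / (y₂ + 1)^2 := by
  refine ⟨12, by norm_num, fun y hy => ?_⟩
  calc ∫ z in (0 : ℝ)..y, erfc (z / 2) / (y - z + 1)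
      ≤ ∫ z in (0 : ℝ)..y, 12 / (y + 1) * (1 / (z + 1) ^ 2) :=
        intervalIntegral.integral_mono_on_of_nonneg hy.le
          (fun z hz => div_nonneg (erfc_nonneg _) (by linarith [hz.2]))
          ((intervalIntegrable_one_div_add_one_sq (by linarith)).const_mul _)
          (fun z hz => erfc_half_div_le hz.1.le hz.2)
    _ = 12 * y / (y + 1) ^ 2 := by
        rw [intervalIntegral.integral_const_mul, integral_one_div_add_one_sq (by linarith)]
        field_simp
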